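/- Let n ≥ 2 be an integer. There exists a constant C > 0, depending only on n, such that for every ball B ⊂ ℝⁿ of radius 1 with center c_B, every point y ∈ ℝⁿ, and every s ∈ (0, 2], one has ∫_B χ_{(s,∞)}(|x−y|) · |x−y|^{2−n} (|x−y|² − s²)^{−1/2} dx ≤ C / (1 + |y−c_B|^{n−1}). -/

import Mathlib

/-!
Near the ball (`|y - c_B| ≤ 5`) enlarge `B` to the ball of radius 6 around `y` and integrate in
polar coordinates centred at `y`: the Jacobian `r^{n-1}` cancels `r^{2-n}`, and
`r (r² - s²)^{-1/2} ≤ √r (r - s)^{-1/2}` has a bounded integral over `(s, 6]`.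
Far from the ball, `|x - y| ≥ |y - c_B| - 1 ≥ 2s` on `B`, where the kernel is at most
`2 |x - y|^{1-n} ≤ 2 (|y - c_B| - 1)^{1-n}`, which is comparable to `1 / (1 + |y - c_B|^{n-1})`.
-/

open MeasureTheory Set Metric
open scoped ENNReal

section PolarCoordinates

variable {E : Type*} [NormedAddCommGroup E] [NormedSpace ℝ E] [MeasurableSpace E] [BorelSpace E]
  [FiniteDimensional ℝ E] [Nontrivial E] (μ : Measure E) [μ.IsAddHaarMeasure]

lemma lintegral_fun_norm_addHaar {f : ℝ → ℝ≥0∞} (hf : Measurable f) :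
    ∫⁻ x, f ‖x‖ ∂μ = μ.toSphere univ *
      ∫⁻ r in Ioi (0 : ℝ), ENNReal.ofReal (r ^ (Module.finrank ℝ E - 1)) * f r :=
  calc
    ∫⁻ x, f ‖x‖ ∂μ = ∫⁻ x : ({(0)}ᶜ : Set E), f ‖x.1‖ ∂(μ.comap (↑)) := by
      rw [lintegral_subtype_comap (measurableSet_singleton _).compl fun x ↦ f ‖x‖,
        restrict_compl_singleton]
    _ = ∫⁻ x, f x.2 ∂μ.toSphere.prod (.volumeIoiPow (Module.finrank ℝ E - 1)) := by
      simpa using μ.measurePreserving_homeomorphUnitSphereProd.lintegral_comp_emb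
        (Homeomorph.measurableEmbedding _) (f ∘ Subtype.val ∘ Prod.snd)
    _ = μ.toSphere univ * ∫⁻ r : Ioi (0 : ℝ), f r ∂.volumeIoiPow (Module.finrank ℝ E - 1) := by
      simpa using lintegral_prod_mul (μ := μ.toSphere) (f := fun _ ↦ 1)
        aemeasurable_const (hf.comp measurable_subtype_coe).aemeasurable
    _ = _ := by
      rw [Measure.volumeIoiPow, lintegral_withDensity_eq_lintegral_mul _ (by fun_prop)
        (g := fun r : Ioi (0 : ℝ) ↦ f r) (hf.comp measurable_subtype_coe),
        ← lintegral_subtype_comap measurableSet_Ioi]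
      rfl

lemma setLIntegral_ball_fun_dist_addHaar {f : ℝ → ℝ≥0∞} (hf : Measurable f) (y : E) (R : ℝ) :
    ∫⁻ x in ball y R, f (dist x y) ∂μ = μ.toSphere univ *
      ∫⁻ r in Ioo 0 R, ENNReal.ofReal (r ^ (Module.finrank ℝ E - 1)) * f r := by
  have hball : ∀ x, (ball y R).indicator (fun x ↦ f (dist x y)) x = (Iio R).indicator f ‖x - y‖ :=
    fun x ↦ by simp [indicator, dist_eq_norm]
  rw [← lintegral_indicator measurableSet_ball, funext hball,
    lintegral_sub_right_eq_self (fun x ↦ (Iio R).indicator f ‖x‖) y,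
    lintegral_fun_norm_addHaar μ (hf.indicator measurableSet_Iio), ← Ioi_inter_Iio, inter_comm,
    ← setLIntegral_indicator measurableSet_Iio]
  simp only [indicator_mul_right]

end PolarCoordinates

lemma lintegral_Ioc_sub_rpow {a s R : ℝ} (ha : -1 < a) (hsR : s ≤ R) :
    ∫⁻ r in Ioc s R, ENNReal.ofReal ((r - s) ^ a) =
      ENNReal.ofReal ((R - s) ^ (a + 1) / (a + 1)) := by
  have hint : IntegrableOn (fun r ↦ (r - s) ^ a) (Ioc s R) := by
    simpa using ((intervalIntegral.intervalIntegrable_rpow' (a := 0) (b := R - s) ha).comp_sub_right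
      s).1
  rw [← ofReal_integral_eq_lintegral_ofReal hint, ← intervalIntegral.integral_of_le hsR,
    intervalIntegral.integral_comp_sub_right (fun u ↦ u ^ a), sub_self, integral_rpow (.inl ha),
    Real.zero_rpow (by linarith), sub_zero]
  filter_upwards [ae_restrict_mem measurableSet_Ioc] with r hr
  exact Real.rpow_nonneg (sub_nonneg.2 hr.1.le) a

lemma mul_rpow_sq_sub_sq_le {r s : ℝ} (hs : 0 ≤ s) (hsr : s < r) :
    r * (r ^ 2 - s ^ 2) ^ (-(1 / 2) : ℝ) ≤ √r * (r - s) ^ (-(1 / 2) : ℝ) := by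
  have hr : 0 < r := hs.trans_lt hsr
  have hsum : (r + s) ^ (-(1 / 2) : ℝ) ≤ r ^ (-(1 / 2) : ℝ) :=
    Real.rpow_le_rpow_of_nonpos hr (by linarith) (by norm_num)
  have hsqrt : r * r ^ (-(1 / 2) : ℝ) = √r := by
    rw [Real.sqrt_eq_rpow, ← Real.rpow_one_add' hr.le (by norm_num)]
    norm_num
  calc r * (r ^ 2 - s ^ 2) ^ (-(1 / 2) : ℝ)
      = r * (r + s) ^ (-(1 / 2) : ℝ) * (r - s) ^ (-(1 / 2) : ℝ) := by
        rw [show r ^ 2 - s ^ 2 = (r - s) * (r + s) by ring,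
          Real.mul_rpow (by linarith) (by linarith)]
        ring
    _ ≤ r * r ^ (-(1 / 2) : ℝ) * (r - s) ^ (-(1 / 2) : ℝ) := by
        gcongr
    _ = √r * (r - s) ^ (-(1 / 2) : ℝ) := by rw [hsqrt]

lemma rpow_two_sub_natCast {r : ℝ} (hr : 0 < r) {n : ℕ} (hn : 1 ≤ n) :
    r ^ ((2 : ℝ) - n) = r / r ^ (n - 1) := by
  obtain ⟨k, rfl⟩ := Nat.exists_eq_add_of_le' hn
  rw [Real.rpow_sub hr, Real.rpow_two, Real.rpow_natCast, Nat.add_sub_cancel]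
  field_simp
  ring

noncomputable def truncatedKernel (n : ℕ) (s r : ℝ) : ℝ :=
  (Ioi s).indicator (fun _ ↦ (1 : ℝ)) r * (r ^ ((2 : ℝ) - n) * (r ^ 2 - s ^ 2) ^ (-(1 / 2) : ℝ))

namespace truncatedKernel

variable {n : ℕ} {s r : ℝ}

lemma of_le (h : r ≤ s) : truncatedKernel n s r = 0 := by
  simp [truncatedKernel, h]

lemma of_lt (h : s < r) :
    truncatedKernel n s r = r ^ ((2 : ℝ) - n) * (r ^ 2 - s ^ 2) ^ (-(1 / 2) : ℝ) := by
  simp [truncatedKernel, indicator_of_mem (mem_Ioi.2 h)]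

lemma measurable (n : ℕ) (s : ℝ) : Measurable (truncatedKernel n s) := by
  unfold truncatedKernel
  exact (measurable_const.indicator measurableSet_Ioi).mul (by fun_prop)

lemma pow_pred_mul_le (hn : 1 ≤ n) (hs : 0 ≤ s) (hsr : s < r) :
    r ^ (n - 1) * truncatedKernel n s r ≤ √r * (r - s) ^ (-(1 / 2) : ℝ) := by
  have hr : 0 < r := hs.trans_lt hsr
  rw [of_lt hsr, rpow_two_sub_natCast hr hn, ← mul_assoc, mul_div_cancel₀ _ (by positivity)]
  exact mul_rpow_sq_sub_sq_le hs hsr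

lemma le_of_two_mul_le (hn : 1 ≤ n) (hs : 0 < s) (h : 2 * s ≤ r) :
    truncatedKernel n s r ≤ 2 / r ^ (n - 1) := by
  have hr : 0 < r := by linarith
  have hsqrt : r / 2 ≤ √(r ^ 2 - s ^ 2) := Real.le_sqrt_of_sq_le (by nlinarith)
  rw [of_lt (by linarith), rpow_two_sub_natCast hr hn,
    Real.rpow_neg (by nlinarith), ← Real.sqrt_eq_rpow]
  calc r / r ^ (n - 1) * (√(r ^ 2 - s ^ 2))⁻¹ ≤ r / r ^ (n - 1) * (r / 2)⁻¹ := by gcongr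
    _ = 2 / r ^ (n - 1) := by field_simp

end truncatedKernel

lemma setLIntegral_ball_truncatedKernel_le {n : ℕ} (hn : 1 ≤ n) {s R : ℝ} (hs : 0 ≤ s)
    (hsR : s ≤ R) (y : EuclideanSpace ℝ (Fin n)) :
    ∫⁻ x in ball y R, ENNReal.ofReal (truncatedKernel n s (dist x y)) ≤
      ENNReal.ofReal (n * volume.real (ball (0 : EuclideanSpace ℝ (Fin n)) 1) * (2 * R)) := by
  have : Nontrivial (EuclideanSpace ℝ (Fin n)) := by
    have : Nonempty (Fin n) := ⟨⟨0, hn⟩⟩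
    infer_instance
  rw [setLIntegral_ball_fun_dist_addHaar _ (truncatedKernel.measurable n s).ennreal_ofReal,
    Measure.toSphere_apply_univ, finrank_euclideanSpace_fin, ENNReal.ofReal_mul (by positivity),
    ENNReal.ofReal_mul (by positivity), ENNReal.ofReal_natCast, ofReal_measureReal]
  gcongr
  have hpt : ∀ r ∈ Ioo 0 R, ENNReal.ofReal (r ^ (n - 1)) * ENNReal.ofReal (truncatedKernel n s r)
      ≤ (Ioi s).indicator (fun r ↦ ENNReal.ofReal (√R * (r - s) ^ (-(1 / 2) : ℝ))) r := by
    rintro r ⟨hr, hrR⟩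
    rcases le_or_gt r s with hrs | hsr
    · simp [truncatedKernel.of_le hrs]
    rw [indicator_of_mem (mem_Ioi.2 hsr), ← ENNReal.ofReal_mul (by positivity)]
    refine ENNReal.ofReal_le_ofReal ((truncatedKernel.pow_pred_mul_le hn hs hsr).trans ?_)
    gcongr
  calc ∫⁻ r in Ioo 0 R, ENNReal.ofReal (r ^ (n - 1)) * ENNReal.ofReal (truncatedKernel n s r)
      ≤ ∫⁻ r in Ioi s ∩ Ioo 0 R, ENNReal.ofReal (√R * (r - s) ^ (-(1 / 2) : ℝ)) := by
        rw [← setLIntegral_indicator measurableSet_Ioi]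
        exact setLIntegral_mono' measurableSet_Ioo hpt
    _ ≤ ∫⁻ r in Ioc s R, ENNReal.ofReal (√R * (r - s) ^ (-(1 / 2) : ℝ)) :=
        lintegral_mono_set fun r hr ↦ ⟨hr.1, hr.2.2.le⟩
    _ = ENNReal.ofReal √R *
          ENNReal.ofReal ((R - s) ^ (-(1 / 2) + 1 : ℝ) / (-(1 / 2) + 1)) := by
        simp_rw [ENNReal.ofReal_mul (Real.sqrt_nonneg R)]
        rw [lintegral_const_mul' _ _ ENNReal.ofReal_ne_top,
          lintegral_Ioc_sub_rpow (by norm_num) hsR]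
    _ ≤ ENNReal.ofReal (2 * R) := by
        rw [← ENNReal.ofReal_mul (Real.sqrt_nonneg R)]
        refine ENNReal.ofReal_le_ofReal ?_
        norm_num [← Real.sqrt_eq_rpow]
        have : √(R - s) ≤ √R := Real.sqrt_le_sqrt (by linarith)
        nlinarith [Real.mul_self_sqrt (hs.trans hsR), Real.sqrt_nonneg R]

lemma setLIntegral_ball_truncatedKernel_le_of_far {α : Type*} [PseudoMetricSpace α]
    [MeasurableSpace α] (μ : Measure α) {n : ℕ} (hn : 1 ≤ n) {s ρ : ℝ} (hs : 0 < s) {c y : α}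
    (hfar : 2 * s + ρ ≤ dist y c) :
    ∫⁻ x in ball c ρ, ENNReal.ofReal (truncatedKernel n s (dist x y)) ∂μ ≤
      ENNReal.ofReal (2 / (dist y c - ρ) ^ (n - 1)) * μ (ball c ρ) := by
  rw [← setLIntegral_const]
  refine setLIntegral_mono measurable_const fun x hx ↦ ENNReal.ofReal_le_ofReal ?_
  have hxy : dist y c - ρ < dist x y := by
    linarith [dist_triangle y x c, dist_comm x y, mem_ball.1 hx]
  calc truncatedKernel n s (dist x y) ≤ 2 / dist x y ^ (n - 1) :=
        truncatedKernel.le_of_two_mul_le hn hs (by linarith)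
    _ ≤ 2 / (dist y c - ρ) ^ (n - 1) := by
        have hpos : 0 < dist y c - ρ := by linarith
        gcongr

lemma le_div_one_add_pow {A d : ℝ} (k : ℕ) (hA : 0 ≤ A) (hd0 : 0 ≤ d) (hd : d ≤ 5) :
    A ≤ 2 * 5 ^ k * A / (1 + d ^ k) := by
  have hdk : d ^ k ≤ 5 ^ k := pow_le_pow_left₀ hd0 hd k
  have h5k : (1 : ℝ) ≤ 5 ^ k := one_le_pow₀ (by norm_num)
  rw [le_div_iff₀ (by positivity)]
  nlinarith

lemma div_sub_one_pow_le_div_one_add_pow {A d : ℝ} (k : ℕ) (hA : 0 ≤ A) (hd : 5 / 4 ≤ d) :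
    A / (d - 1) ^ k ≤ 2 * 5 ^ k * A / (1 + d ^ k) := by
  have hd1 : 0 < d - 1 := by linarith
  have h1 : 1 ≤ d ^ k := one_le_pow₀ (by linarith)
  have h2 : d ^ k ≤ 5 ^ k * (d - 1) ^ k := by
    rw [← mul_pow]
    exact pow_le_pow_left₀ (by linarith) (by linarith) k
  rw [div_le_div_iff₀ (by positivity) (by positivity)]
  nlinarith [mul_le_mul_of_nonneg_left h2 hA]

theorem stmt_0 (n : ℕ) (hn : 2 ≤ n) :
    ∃ C : ℝ, 0 < C ∧
      ∀ (cB y : EuclideanSpace ℝ (Fin n)) (s : ℝ), 0 < s → s ≤ 2 →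
        (∫⁻ x in Metric.ball cB 1,
            ENNReal.ofReal ((Set.Ioi s).indicator (fun _ => (1 : ℝ)) (dist x y) *
              (dist x y ^ ((2 : ℝ) - n) * (dist x y ^ 2 - s ^ 2) ^ (-(1 / 2) : ℝ))))
          ≤ ENNReal.ofReal (C / (1 + dist y cB ^ ((n : ℝ) - 1))) := by
  have hn1 : 1 ≤ n := by omega
  set β := volume.real (ball (0 : EuclideanSpace ℝ (Fin n)) 1) with hβ
  have hβ_pos : 0 < β := ENNReal.toReal_pos (measure_ball_pos _ _ one_pos).ne' measure_ball_lt_top.ne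
  refine ⟨2 * 5 ^ (n - 1) * (n * β * (2 * 6)), by positivity, fun cB y s hs hs2 ↦ ?_⟩
  change ∫⁻ x in ball cB 1, ENNReal.ofReal (truncatedKernel n s (dist x y)) ≤ _
  rw [← Nat.cast_pred hn1, Real.rpow_natCast]
  rcases le_total (dist y cB) 5 with hnear | hfar
  · calc _ ≤ ∫⁻ x in ball y 6, ENNReal.ofReal (truncatedKernel n s (dist x y)) :=
          lintegral_mono_set (ball_subset_ball' (by rw [dist_comm]; linarith))
      _ ≤ ENNReal.ofReal (n * β * (2 * 6)) :=
          setLIntegral_ball_truncatedKernel_le hn1 hs.le (by linarith) y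
      _ ≤ _ := ENNReal.ofReal_le_ofReal (le_div_one_add_pow _ (by positivity) dist_nonneg hnear)
  · have hn' : (1 : ℝ) ≤ n := by exact_mod_cast hn1
    have hd1 : 0 < dist y cB - 1 := by linarith
    calc _ ≤ ENNReal.ofReal (2 / (dist y cB - 1) ^ (n - 1)) * volume (ball cB 1) :=
          setLIntegral_ball_truncatedKernel_le_of_far _ hn1 hs (by linarith)
      _ = ENNReal.ofReal (2 * β / (dist y cB - 1) ^ (n - 1)) := by
          rw [Measure.addHaar_ball_center, ← ofReal_measureReal, ← hβ,
            ← ENNReal.ofReal_mul (by positivity), div_mul_eq_mul_div]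
      _ ≤ ENNReal.ofReal (n * β * (2 * 6) / (dist y cB - 1) ^ (n - 1)) :=
          ENNReal.ofReal_le_ofReal (div_le_div_of_nonneg_right (by nlinarith) (by positivity))
      _ ≤ _ := ENNReal.ofReal_le_ofReal
          (div_sub_one_pow_le_div_one_add_pow _ (by positivity) (by linarith))
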